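/- arXiv:0802.2087 — 9 statements merged into one kernel-verified Lean document; each statement's English description precedes it below -/
import Mathlib

section
/- Let K, L, k, ℓ be integers with K > 1, L > 1, 1 ≤ k ≤ K, 1 ≤ ℓ ≤ L, and k + ℓ < K + L. Then ((K+L)²/(K+L−1))·((K+L)/(k+ℓ) − 1) − (K²/(K−1))·(K/k − 1) − (L²/(L−1))·(L/ℓ − 1) < 0. -/
/-!
Write the rescaled variance of a sample of size `n` from `N` balls as `N/(N-1) · (N²/n - N)`.
The second factor is subadditive over strata by Sedrakyan's lemma
`(a+b)²/(x+y) ≤ a²/x + b²/y`, and the finite-population factor `N/(N-1)` strictly decreases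
in `N`, so pooling can only lose; the loss is strict because at least one stratum is not
sampled exhaustively.
-/

open Finset

noncomputable def scaledVariance (N n : ℝ) : ℝ := N ^ 2 / (N - 1) * (N / n - 1)

theorem scaledVariance_eq (N n : ℝ) :
    scaledVariance N n = N / (N - 1) * (N ^ 2 / n - N) := by
  unfold scaledVariance; ring

theorem add_sq_div_add_le {x y : ℝ} (a b : ℝ) (hx : 0 < x) (hy : 0 < y) :
    (a + b) ^ 2 / (x + y) ≤ a ^ 2 / x + b ^ 2 / y := by
  simpa [Fin.sum_univ_two] using
    sq_sum_div_le_sum_sq_div univ ![a, b] (g := ![x, y]) (by simp [Fin.forall_fin_two, hx, hy])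

theorem sq_div_sub_nonneg {N n : ℝ} (hn : 0 < n) (hnN : n ≤ N) : 0 ≤ N ^ 2 / n - N := by
  rw [sub_nonneg, le_div_iff₀ hn, sq]
  exact mul_le_mul_of_nonneg_left hnN (hn.le.trans hnN)

theorem sq_div_sub_pos {N n : ℝ} (hn : 0 < n) (hnN : n < N) : 0 < N ^ 2 / n - N := by
  rw [sub_pos, lt_div_iff₀ hn, sq]
  exact mul_lt_mul_of_pos_left hnN (hn.trans hnN)

theorem div_sub_one_lt_div_sub_one {M N : ℝ} (hN : 1 < N) (hNM : N < M) :
    M / (M - 1) < N / (N - 1) := by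
  rw [div_lt_div_iff₀ (by linarith) (by linarith)]
  linarith

theorem scaledVariance_add_lt {a b x y : ℝ} (ha : 1 < a) (hb : 1 < b) (hx : 0 < x) (hy : 0 < y)
    (hxa : x ≤ a) (hyb : y ≤ b) (hxy : x + y < a + b) :
    scaledVariance (a + b) (x + y) < scaledVariance a x + scaledVariance b y := by
  simp only [scaledVariance_eq]
  set u := a ^ 2 / x - a
  set v := b ^ 2 / y - b
  have hu : 0 ≤ u := sq_div_sub_nonneg hx hxa
  have hv : 0 ≤ v := sq_div_sub_nonneg hy hyb
  have hpool : (a + b) ^ 2 / (x + y) - (a + b) ≤ u + v := by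
    linarith [add_sq_div_add_le a b hx hy]
  have hca : (a + b) / (a + b - 1) < a / (a - 1) := div_sub_one_lt_div_sub_one ha (by linarith)
  have hcb : (a + b) / (a + b - 1) < b / (b - 1) := div_sub_one_lt_div_sub_one hb (by linarith)
  have hc : 0 < (a + b) / (a + b - 1) := div_pos (by linarith) (by linarith)
  calc (a + b) / (a + b - 1) * ((a + b) ^ 2 / (x + y) - (a + b))
      ≤ (a + b) / (a + b - 1) * u + (a + b) / (a + b - 1) * v := by
        rw [← mul_add]; exact mul_le_mul_of_nonneg_left hpool hc.le
    _ < a / (a - 1) * u + b / (b - 1) * v := by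
        rcases hxa.lt_or_eq with hxa' | rfl
        · exact add_lt_add_of_lt_of_le
            (mul_lt_mul_of_pos_right hca (sq_div_sub_pos hx hxa'))
            (mul_le_mul_of_nonneg_right hcb.le hv)
        · exact add_lt_add_of_le_of_lt (mul_le_mul_of_nonneg_right hca.le hu)
            (mul_lt_mul_of_pos_right hcb (sq_div_sub_pos hy (by linarith)))

/-- The two-strata inequality behind Theorem 2. -/
theorem two_strata_inequality (K L k l : ℕ) (hK : 1 < K) (hL : 1 < L)
    (hk1 : 1 ≤ k) (hkK : k ≤ K) (hl1 : 1 ≤ l) (hlL : l ≤ L) (hkl : k + l < K + L) :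
    (((K : ℝ) + L) ^ 2 / ((K : ℝ) + L - 1)) * (((K : ℝ) + L) / ((k : ℝ) + l) - 1)
      - ((K : ℝ) ^ 2 / ((K : ℝ) - 1)) * ((K : ℝ) / k - 1)
      - ((L : ℝ) ^ 2 / ((L : ℝ) - 1)) * ((L : ℝ) / l - 1) < 0 := by
  have key := scaledVariance_add_lt (a := K) (b := L) (x := k) (y := l)
    (by exact_mod_cast hK) (by exact_mod_cast hL) (by exact_mod_cast hk1)
    (by exact_mod_cast hl1) (by exact_mod_cast hkK) (by exact_mod_cast hlL)
    (by exact_mod_cast hkl)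
  unfold scaledVariance at key
  linarith
end

section
/- Theorem 3, case (c1): Let m ≥ 2, let N_1,…,N_m ≥ 2 be integers with N = ∑_{j=1}^m N_j, let p ∈ (0,1), and let (n_1,…,n_m) be integers with 1 ≤ n_j ≤ (3/4)·N_j for all j and n = ∑_{j=1}^m n_j < N. Set B = ((N−n)/(N−m))·p(1−p)/n. Then ∑_{j=1}^m (N_j/N)² · (p(1−p)/n_j) · (N_j−n_j)/(N_j−1) ≥ B, with equality if and only if n_j = n/m and N_j = N/m for every j. -/
/-!
Writing `g X Y W = X² (X - Y) / (Y W)` (`stratumCost`), the variance is `p (1 - p) / N²` times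
`∑ⱼ g Nⱼ nⱼ (Nⱼ - 1)` and `B` is the same multiple of `g N n (N - m)`. The function `g` is
positively homogeneous of degree one and, on the cone `4 Y ≤ 3 X`, lies above its tangent plane
at any point of the cone: the gap is `W⁻¹` times the Bregman divergence of
`h x y = x² (x - y) / y`, whose Hessian has determinant `x³ (3 x - 4 y) / y⁴`. Summing the
tangent planes at the total `(N, n, N - m)` over the strata gives `g N n (N - m)` back by Euler's
identity. The Bregman divergence vanishes only at coinciding points, so equality forces every
`(Nⱼ, nⱼ, Nⱼ - 1)` to be proportional to `(N, n, N - m)`.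
-/

open Finset

-- The Bregman divergence of `h x y = x² (x - y) / y` between `(u q, q)` and `(v s, s)`.
def bregmanForm (u v q s : ℝ) : ℝ :=
  u ^ 2 * (u - 1) * q ^ 2 + v * (v ^ 2 - 3 * u * v + 2 * u) * q * s + v ^ 2 * (v - 1) * s ^ 2

lemma bregmanForm_self (u q : ℝ) : bregmanForm u u q q = 0 := by
  unfold bregmanForm; ring

lemma four_mul_bregmanForm (u v q s : ℝ) :
    4 * (u ^ 2 * (u - 1)) * bregmanForm u v q s =
      (2 * (u ^ 2 * (u - 1)) * q + v * (v ^ 2 - 3 * u * v + 2 * u) * s) ^ 2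
        + (v * (u - v) * s) ^ 2 * (4 * u * v - v ^ 2 - 4 * u) := by
  unfold bregmanForm; ring

-- `4uv - v² - 4u = u (v - 2) - (v² - 3uv + 2u) = 4 (u - 4/3) (v - 1) + (v - 4/3) (4 - v)`.
lemma bregmanForm_discriminant_pos {u v : ℝ} (hu : 4 / 3 ≤ u) (hv : 4 / 3 ≤ v) (huv : u ≠ v)
    (hneg : v ^ 2 - 3 * u * v + 2 * u < 0) : 0 < 4 * u * v - v ^ 2 - 4 * u := by
  rcases le_or_gt 2 v with hv2 | hv2
  · nlinarith [mul_nonneg (by linarith : (0 : ℝ) ≤ u) (sub_nonneg.2 hv2)]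
  · rcases hu.lt_or_eq with hu' | rfl
    · nlinarith [mul_pos (sub_pos.2 hu') (by linarith : (0 : ℝ) < v - 1)]
    · nlinarith [mul_pos (sub_pos.2 (hv.lt_of_ne huv)) (by linarith : (0 : ℝ) < 4 - v)]

lemma bregmanForm_pos {u v q s : ℝ} (hu : 4 / 3 ≤ u) (hv : 4 / 3 ≤ v) (hq : 0 < q) (hs : 0 < s)
    (hne : ¬(u = v ∧ q = s)) : 0 < bregmanForm u v q s := by
  have hA : 0 < u ^ 2 * (u - 1) := mul_pos (by positivity) (by linarith)
  by_cases huv : u = v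
  · subst huv
    have hqs : q - s ≠ 0 := sub_ne_zero.2 fun h => hne ⟨rfl, h⟩
    have hdiag : bregmanForm u u q s = u ^ 2 * (u - 1) * (q - s) ^ 2 := by
      unfold bregmanForm; ring
    rw [hdiag]; positivity
  rcases le_or_gt 0 (v ^ 2 - 3 * u * v + 2 * u) with hB | hB
  · have hv0 : 0 ≤ v := by linarith
    have hv1 : 0 ≤ v - 1 := by linarith
    have hqq : 0 < u ^ 2 * (u - 1) * q ^ 2 := by positivity
    have hqs : 0 ≤ v * (v ^ 2 - 3 * u * v + 2 * u) * q * s := by positivity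
    have hss : 0 ≤ v ^ 2 * (v - 1) * s ^ 2 := by positivity
    unfold bregmanForm
    linarith
  · have hK := bregmanForm_discriminant_pos hu hv huv hB
    have hvus : v * (u - v) * s ≠ 0 :=
      mul_ne_zero (mul_ne_zero (by linarith) (sub_ne_zero.2 huv)) hs.ne'
    have h4 : 0 < 4 * (u ^ 2 * (u - 1)) * bregmanForm u v q s := by
      rw [four_mul_bregmanForm]; positivity
    exact pos_of_mul_pos_right h4 (by positivity)

lemma bregmanForm_nonneg {u v q s : ℝ} (hu : 4 / 3 ≤ u) (hv : 4 / 3 ≤ v) (hq : 0 < q)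
    (hs : 0 < s) : 0 ≤ bregmanForm u v q s := by
  by_cases h : u = v ∧ q = s
  · rw [h.1, h.2, bregmanForm_self]
  · exact (bregmanForm_pos hu hv hq hs h).le

lemma bregmanForm_eq_zero_iff {u v q s : ℝ} (hu : 4 / 3 ≤ u) (hv : 4 / 3 ≤ v) (hq : 0 < q)
    (hs : 0 < s) : bregmanForm u v q s = 0 ↔ u = v ∧ q = s := by
  refine ⟨fun h => ?_, fun h => by rw [h.1, h.2, bregmanForm_self]⟩
  by_contra hne
  exact (bregmanForm_pos hu hv hq hs hne).ne' h

noncomputable def stratumCost (X Y W : ℝ) : ℝ := X ^ 2 * (X - Y) / (Y * W)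

-- The tangent plane of `stratumCost` at `(R, S, M)`; it passes through the origin because
-- `stratumCost` is positively homogeneous of degree one.
noncomputable def stratumTangent (R S M X Y W : ℝ) : ℝ :=
  (3 * R ^ 2 - 2 * R * S) / (S * M) * X - R ^ 3 / (S ^ 2 * M) * Y
    - R ^ 2 * (R - S) / (S * M ^ 2) * W

lemma sq_div_mul_div_mul_div_eq_mul_stratumCost (X Y N c : ℝ) :
    (X / N) ^ 2 * (c / Y) * ((X - Y) / (X - 1)) = c / N ^ 2 * stratumCost X Y (X - 1) := by
  rw [stratumCost, div_mul_eq_div_div]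
  ring

lemma stratumCost_sub_stratumTangent {X Y W R S M : ℝ} (hY : Y ≠ 0) (hW : W ≠ 0) (hS : S ≠ 0)
    (hM : M ≠ 0) :
    stratumCost X Y W - stratumTangent R S M X Y W =
      bregmanForm (X / Y) (R / S) Y (S * W / M) / W := by
  unfold stratumCost stratumTangent bregmanForm
  field_simp
  ring

lemma stratumTangent_self {R S M : ℝ} (hS : S ≠ 0) (hM : M ≠ 0) :
    stratumTangent R S M R S M = stratumCost R S M := by
  unfold stratumCost stratumTangent
  field_simp
  ring

lemma sum_stratumTangent {ι : Type*} (s : Finset ι) (R S M : ℝ) (X Y W : ι → ℝ) :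
    ∑ i ∈ s, stratumTangent R S M (X i) (Y i) (W i) =
      stratumTangent R S M (∑ i ∈ s, X i) (∑ i ∈ s, Y i) (∑ i ∈ s, W i) := by
  simp only [stratumTangent, sum_sub_distrib, mul_sum]

lemma four_thirds_le_div {a b : ℝ} (hb : 0 < b) (h : 4 * b ≤ 3 * a) : 4 / 3 ≤ a / b := by
  rw [le_div_iff₀ hb]; linarith

lemma stratumTangent_le {X Y W R S M : ℝ} (hY : 0 < Y) (hW : 0 < W) (hS : 0 < S) (hM : 0 < M)
    (hXY : 4 * Y ≤ 3 * X) (hRS : 4 * S ≤ 3 * R) :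
    stratumTangent R S M X Y W ≤ stratumCost X Y W := by
  rw [← sub_nonneg, stratumCost_sub_stratumTangent hY.ne' hW.ne' hS.ne' hM.ne']
  exact div_nonneg (bregmanForm_nonneg (four_thirds_le_div hY hXY) (four_thirds_le_div hS hRS) hY
    (by positivity)) hW.le

lemma stratumTangent_eq_iff {X Y W R S M : ℝ} (hY : 0 < Y) (hW : 0 < W) (hS : 0 < S)
    (hM : 0 < M) (hXY : 4 * Y ≤ 3 * X) (hRS : 4 * S ≤ 3 * R) :
    stratumTangent R S M X Y W = stratumCost X Y W ↔ X * M = R * W ∧ Y * M = S * W := by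
  rw [eq_comm, ← sub_eq_zero, stratumCost_sub_stratumTangent hY.ne' hW.ne' hS.ne' hM.ne',
    div_eq_zero_iff, or_iff_left hW.ne',
    bregmanForm_eq_zero_iff (four_thirds_le_div hY hXY) (four_thirds_le_div hS hRS) hY
      (by positivity), div_eq_div_iff hY.ne' hS.ne', eq_div_iff hM.ne']
  constructor
  · rintro ⟨hXS, hYM⟩
    refine ⟨mul_right_cancel₀ hS.ne' ?_, hYM⟩
    linear_combination M * hXS + R * hYM
  · rintro ⟨hXM, hYM⟩
    refine ⟨mul_right_cancel₀ hM.ne' ?_, hYM⟩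
    linear_combination S * hXM - R * hYM

lemma stratumCost_sum_le_sum {ι : Type*} {s : Finset ι} (hs : s.Nonempty) {X Y W : ι → ℝ}
    (hY : ∀ i ∈ s, 0 < Y i) (hW : ∀ i ∈ s, 0 < W i) (hXY : ∀ i ∈ s, 4 * Y i ≤ 3 * X i) :
    stratumCost (∑ i ∈ s, X i) (∑ i ∈ s, Y i) (∑ i ∈ s, W i) ≤
      ∑ i ∈ s, stratumCost (X i) (Y i) (W i) := by
  have hS := sum_pos hY hs
  have hM := sum_pos hW hs
  have hRS : 4 * ∑ i ∈ s, Y i ≤ 3 * ∑ i ∈ s, X i := by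
    rw [mul_sum, mul_sum]; exact sum_le_sum hXY
  rw [← stratumTangent_self hS.ne' hM.ne', ← sum_stratumTangent]
  exact sum_le_sum fun i hi => stratumTangent_le (hY i hi) (hW i hi) hS hM (hXY i hi) hRS

lemma stratumCost_sum_eq_sum_iff {ι : Type*} {s : Finset ι} (hs : s.Nonempty) {X Y W : ι → ℝ}
    (hY : ∀ i ∈ s, 0 < Y i) (hW : ∀ i ∈ s, 0 < W i) (hXY : ∀ i ∈ s, 4 * Y i ≤ 3 * X i) :
    stratumCost (∑ i ∈ s, X i) (∑ i ∈ s, Y i) (∑ i ∈ s, W i) =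
        ∑ i ∈ s, stratumCost (X i) (Y i) (W i) ↔
      ∀ i ∈ s, X i * ∑ j ∈ s, W j = (∑ j ∈ s, X j) * W i ∧
        Y i * ∑ j ∈ s, W j = (∑ j ∈ s, Y j) * W i := by
  have hS := sum_pos hY hs
  have hM := sum_pos hW hs
  have hRS : 4 * ∑ i ∈ s, Y i ≤ 3 * ∑ i ∈ s, X i := by
    rw [mul_sum, mul_sum]; exact sum_le_sum hXY
  rw [← stratumTangent_self hS.ne' hM.ne', ← sum_stratumTangent,
    sum_eq_sum_iff_of_le fun i hi => stratumTangent_le (hY i hi) (hW i hi) hS hM (hXY i hi) hRS]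
  exact forall₂_congr fun i hi => stratumTangent_eq_iff (hY i hi) (hW i hi) hS hM (hXY i hi) hRS

lemma proportional_to_total_iff {a b A B c : ℝ} (ha : a - 1 ≠ 0) :
    a * (A - c) = A * (a - 1) ∧ b * (A - c) = B * (a - 1) ↔ c * b = B ∧ c * a = A := by
  constructor
  · rintro ⟨hA, hB⟩
    have hcA : c * a = A := by linear_combination -hA
    refine ⟨mul_right_cancel₀ ha ?_, hcA⟩
    linear_combination hB + b * hcA
  · rintro ⟨rfl, rfl⟩
    constructor <;> ring

theorem stratified_lower_bound_c1_general (m : ℕ) (hm : 2 ≤ m)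
    (Nj nj : Fin m → ℕ) (hNj : ∀ j, 2 ≤ Nj j)
    (N n : ℕ) (hN : N = ∑ j, Nj j) (hn : n = ∑ j, nj j)
    (hpos : ∀ j, 1 ≤ nj j) (hc1 : ∀ j, 4 * nj j ≤ 3 * Nj j)
    (p : ℝ) (hp : p ∈ Set.Ioo (0 : ℝ) 1)
    (B : ℝ) (hB : B = (((N : ℝ) - n) / ((N : ℝ) - m)) * (p * (1 - p) / n)) :
    (∑ j, ((Nj j : ℝ) / N) ^ 2 * (p * (1 - p) / nj j) *
        (((Nj j : ℝ) - nj j) / ((Nj j : ℝ) - 1)) ≥ B)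
    ∧ (∑ j, ((Nj j : ℝ) / N) ^ 2 * (p * (1 - p) / nj j) *
          (((Nj j : ℝ) - nj j) / ((Nj j : ℝ) - 1)) = B
        ↔ ∀ j, m * nj j = n ∧ m * Nj j = N) := by
  have hne : (univ : Finset (Fin m)).Nonempty := univ_nonempty_iff.2 ⟨⟨0, by omega⟩⟩
  have hY : ∀ j ∈ univ, (0 : ℝ) < nj j := fun j _ => by exact_mod_cast hpos j
  have hW : ∀ j ∈ univ, (0 : ℝ) < Nj j - 1 := fun j _ => sub_pos.2 (Nat.one_lt_cast.2 (hNj j))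
  have hXY : ∀ j ∈ univ, 4 * (nj j : ℝ) ≤ 3 * Nj j := fun j _ => by exact_mod_cast hc1 j
  have hXsum : ∑ j, (Nj j : ℝ) = N := by rw [hN]; push_cast; rfl
  have hYsum : ∑ j, (nj j : ℝ) = n := by rw [hn]; push_cast; rfl
  have hWsum : ∑ j, ((Nj j : ℝ) - 1) = N - m := by simp [sum_sub_distrib, hXsum]
  have hN0 : (0 : ℝ) < N := hXsum ▸ sum_pos (fun j hj => by linarith [hW j hj]) hne
  obtain ⟨hp0, hp1⟩ := hp
  have hc : 0 < p * (1 - p) / N ^ 2 := div_pos (mul_pos hp0 (sub_pos.2 hp1)) (by positivity)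
  have hBcost : B = p * (1 - p) / N ^ 2 * stratumCost N n (N - m) := by
    rw [hB]; unfold stratumCost; field_simp
  have hle := stratumCost_sum_le_sum hne hY hW hXY
  have hiff := stratumCost_sum_eq_sum_iff hne hY hW hXY
  rw [hXsum, hYsum, hWsum] at hle hiff
  simp_rw [sq_div_mul_div_mul_div_eq_mul_stratumCost, ← mul_sum, hBcost]
  refine ⟨mul_le_mul_of_nonneg_left hle hc.le, ?_⟩
  rw [mul_right_inj' hc.ne', eq_comm, hiff]
  simp only [mem_univ, true_implies]
  refine forall_congr' fun j => ?_
  rw [proportional_to_total_iff (hW j (mem_univ j)).ne']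
  norm_cast

/-- **Theorem 3, case (c1).** If all strata have the same red-ball
fraction `p`, `n < N`, and `nⱼ ≤ (3/4)Nⱼ` for all `j`, then the variance of the
stratification estimator without replacement is at least
`B = ((N-n)/(N-m))·p(1-p)/n`, with equality iff `nⱼ = n/m` and `Nⱼ = N/m` for all `j`. -/
theorem stratified_lower_bound_c1 (m : ℕ) (hm : 2 ≤ m)
    (Nj nj : Fin m → ℕ) (hNj : ∀ j, 2 ≤ Nj j)
    (N n : ℕ) (hN : N = ∑ j, Nj j) (hn : n = ∑ j, nj j) (hnN : n < N)
    (hpos : ∀ j, 1 ≤ nj j) (hc1 : ∀ j, 4 * nj j ≤ 3 * Nj j)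
    (p : ℝ) (hp : p ∈ Set.Ioo (0 : ℝ) 1)
    (B : ℝ) (hB : B = (((N : ℝ) - n) / ((N : ℝ) - m)) * (p * (1 - p) / n)) :
    (∑ j, ((Nj j : ℝ) / N) ^ 2 * (p * (1 - p) / nj j) *
        (((Nj j : ℝ) - nj j) / ((Nj j : ℝ) - 1)) ≥ B)
    ∧ (∑ j, ((Nj j : ℝ) / N) ^ 2 * (p * (1 - p) / nj j) *
          (((Nj j : ℝ) - nj j) / ((Nj j : ℝ) - 1)) = B
        ↔ ∀ j, m * nj j = n ∧ m * Nj j = N) :=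
  stratified_lower_bound_c1_general m hm Nj nj hNj N n hN hn hpos hc1 p hp B hB
end

section
/- Theorem 3, case (c2): Let m ≥ 2, let N_1,…,N_m ≥ 2 be integers with N = ∑_{j=1}^m N_j, let p ∈ (0,1), let n < N, and suppose the allocation is proportional, i.e. n_j = (N_j/N)·n is a positive integer for every j with n = ∑_{j=1}^m n_j. Set B = ((N−n)/(N−m))·p(1−p)/n. Then ∑_{j=1}^m (N_j/N)² · (p(1−p)/n_j) · (N_j−n_j)/(N_j−1) ≥ B, with equality if and only if N_j = N/m (and hence n_j = n/m) for every j. -/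
open Finset

/-! Under proportional allocation the `j`-th variance term is `C · Nⱼ² / (Nⱼ - 1)` and
`B = C · N² / (N - m)` for one positive constant `C`, so the claim is Sedrakyan's inequality
`(∑ Nⱼ)² / ∑ (Nⱼ - 1) ≤ ∑ Nⱼ² / (Nⱼ - 1)`. Its defect is
`∑ (Nⱼ - 1) (Nⱼ / (Nⱼ - 1) - N / (N - m))²`, which vanishes exactly when `m Nⱼ = N` for
all `j`. -/

namespace Finset

variable {ι K : Type*} (s : Finset ι) (f : ι → K) {g : ι → K}

theorem sum_sq_div_eq_sq_sum_div_add [Field K] (hg : ∀ i ∈ s, g i ≠ 0) :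
    ∑ i ∈ s, f i ^ 2 / g i = (∑ i ∈ s, f i) ^ 2 / ∑ i ∈ s, g i +
      ∑ i ∈ s, g i * (f i / g i - (∑ j ∈ s, f j) / ∑ j ∈ s, g j) ^ 2 := by
  set F := ∑ j ∈ s, f j
  set G := ∑ j ∈ s, g j
  have hexpand : ∀ i ∈ s, g i * (f i / g i - F / G) ^ 2 =
      f i ^ 2 / g i - 2 * (F / G) * f i + (F / G) ^ 2 * g i := fun i hi => by
    field_simp [hg i hi]
    ring
  rw [sum_congr rfl hexpand, sum_add_distrib, sum_sub_distrib, ← mul_sum, ← mul_sum]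
  by_cases hG : G = 0
  · simp [hG]
  · field_simp
    ring

theorem sq_sum_div_eq_sum_sq_div_iff [Field K] [LinearOrder K] [IsStrictOrderedRing K]
    (hg : ∀ i ∈ s, 0 < g i) :
    (∑ i ∈ s, f i) ^ 2 / ∑ i ∈ s, g i = ∑ i ∈ s, f i ^ 2 / g i ↔
      ∀ i ∈ s, f i / g i = (∑ j ∈ s, f j) / ∑ j ∈ s, g j := by
  rw [sum_sq_div_eq_sq_sum_div_add s f fun i hi => (hg i hi).ne', left_eq_add,
    sum_eq_zero_iff_of_nonneg fun i hi => mul_nonneg (hg i hi).le (sq_nonneg _)]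
  refine forall₂_congr fun i hi => ?_
  rw [mul_eq_zero, or_iff_right (hg i hi).ne', sq_eq_zero_iff, sub_eq_zero]

end Finset

theorem div_sub_one_eq_div_sub_iff {a N m : ℝ} (ha : a - 1 ≠ 0) (hN : N - m ≠ 0) :
    a / (a - 1) = N / (N - m) ↔ m * a = N := by
  rw [div_eq_div_iff ha hN]
  constructor <;> intro h <;> linear_combination -h

theorem Nat.pos_of_cast_eq_mul {k n : ℕ} {c : ℝ} (hk : 0 < k) (h : (k : ℝ) = c * n) : 0 < n :=
  Nat.pos_of_ne_zero fun hn => by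
    simp only [hn, Nat.cast_zero, mul_zero, Nat.cast_eq_zero] at h
    omega

theorem proportional_variance_term {N n Nj p : ℝ} (hN : N ≠ 0) (hn : n ≠ 0) (hNj : Nj ≠ 0) :
    (Nj / N) ^ 2 * (p * (1 - p) / (Nj / N * n)) * ((Nj - Nj / N * n) / (Nj - 1)) =
      p * (1 - p) * (N - n) / (n * N ^ 2) * (Nj ^ 2 / (Nj - 1)) := by
  field_simp

theorem stratified_lower_bound_c2_general (m : ℕ) (hm : 2 ≤ m)
    (Nj nj : Fin m → ℕ) (hNj : ∀ j, 2 ≤ Nj j)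
    (N n : ℕ) (hN : N = ∑ j, Nj j) (hnN : n < N)
    (hpos : ∀ j, 1 ≤ nj j) (hprop : ∀ j, (nj j : ℝ) = ((Nj j : ℝ) / N) * n)
    (p : ℝ) (hp : p ∈ Set.Ioo (0 : ℝ) 1)
    (B : ℝ) (hB : B = (((N : ℝ) - n) / ((N : ℝ) - m)) * (p * (1 - p) / n)) :
    (∑ j, ((Nj j : ℝ) / N) ^ 2 * (p * (1 - p) / nj j) *
        (((Nj j : ℝ) - nj j) / ((Nj j : ℝ) - 1)) ≥ B)
    ∧ (∑ j, ((Nj j : ℝ) / N) ^ 2 * (p * (1 - p) / nj j) *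
          (((Nj j : ℝ) - nj j) / ((Nj j : ℝ) - 1)) = B
        ↔ ∀ j, m * Nj j = N) := by
  have hNj_sub_one : ∀ j ∈ univ, (0 : ℝ) < Nj j - 1 := fun j _ => by
    have : (2 : ℝ) ≤ Nj j := by exact_mod_cast hNj j
    linarith
  have hNsum : ∑ j, (Nj j : ℝ) = N := by simp [hN]
  have hgsum : ∑ j, ((Nj j : ℝ) - 1) = N - m := by simp [sum_sub_distrib, hNsum]
  have : Nonempty (Fin m) := ⟨⟨0, by omega⟩⟩
  have hmN : (0 : ℝ) < N - m := hgsum ▸ sum_pos hNj_sub_one univ_nonempty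
  have hN0 : (0 : ℝ) < N := (Nat.cast_nonneg m).trans_lt (sub_pos.mp hmN)
  have hn : (0 : ℝ) < n :=
    Nat.cast_pos.mpr (Nat.pos_of_cast_eq_mul (hpos ⟨0, by omega⟩) (hprop _))
  set C := p * (1 - p) * (N - n) / (n * N ^ 2)
  have hC : 0 < C := div_pos (mul_pos (mul_pos hp.1 (sub_pos.mpr hp.2))
    (sub_pos.mpr (by exact_mod_cast hnN))) (mul_pos hn (pow_pos hN0 2))
  have hvar : ∑ j, ((Nj j : ℝ) / N) ^ 2 * (p * (1 - p) / nj j) *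
      (((Nj j : ℝ) - nj j) / ((Nj j : ℝ) - 1)) = C * ∑ j, (Nj j : ℝ) ^ 2 / (Nj j - 1) := by
    simp_rw [mul_sum, hprop]
    exact sum_congr rfl fun j hj =>
      proportional_variance_term hN0.ne' hn.ne' (by linarith [hNj_sub_one j hj])
  have hB' : B = C * ((∑ j, (Nj j : ℝ)) ^ 2 / ∑ j, ((Nj j : ℝ) - 1)) := by
    rw [hB, hNsum, hgsum]
    simp only [C]
    field_simp
  rw [hvar, hB']
  refine ⟨mul_le_mul_of_nonneg_left (sq_sum_div_le_sum_sq_div _ _ hNj_sub_one) hC.le, ?_⟩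
  rw [mul_right_inj' hC.ne', eq_comm, sq_sum_div_eq_sum_sq_div_iff _ _ hNj_sub_one, hNsum, hgsum]
  refine forall_congr' fun j => ?_
  rw [imp_iff_right (mem_univ j),
    div_sub_one_eq_div_sub_iff (hNj_sub_one j (mem_univ j)).ne' hmN.ne']
  norm_cast

/-- **Theorem 3, case (c2).** If all strata have the same red-ball
fraction `p`, `n < N`, and the allocation is proportional, then the variance of the
stratification estimator without replacement is at least
`B = ((N-n)/(N-m))·p(1-p)/n`, with equality iff `Nⱼ = N/m` for all `j`. -/
theorem stratified_lower_bound_c2 (m : ℕ) (hm : 2 ≤ m)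
    (Nj nj : Fin m → ℕ) (hNj : ∀ j, 2 ≤ Nj j)
    (N n : ℕ) (hN : N = ∑ j, Nj j) (hn : n = ∑ j, nj j) (hnN : n < N)
    (hpos : ∀ j, 1 ≤ nj j) (hprop : ∀ j, (nj j : ℝ) = ((Nj j : ℝ) / N) * n)
    (p : ℝ) (hp : p ∈ Set.Ioo (0 : ℝ) 1)
    (B : ℝ) (hB : B = (((N : ℝ) - n) / ((N : ℝ) - m)) * (p * (1 - p) / n)) :
    (∑ j, ((Nj j : ℝ) / N) ^ 2 * (p * (1 - p) / nj j) *
        (((Nj j : ℝ) - nj j) / ((Nj j : ℝ) - 1)) ≥ B)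
    ∧ (∑ j, ((Nj j : ℝ) / N) ^ 2 * (p * (1 - p) / nj j) *
          (((Nj j : ℝ) - nj j) / ((Nj j : ℝ) - 1)) = B
        ↔ ∀ j, m * Nj j = N) :=
  stratified_lower_bound_c2_general m hm Nj nj hNj N n hN hnN hpos hprop p hp B hB
end

section
/- Theorem 3, case (c3): Let m ≥ 2, suppose N_1 = N_2 = … = N_m = N/m ≥ 2, let p ∈ (0,1), and let (n_1,…,n_m) be integers with 1 ≤ n_j ≤ N/m and n = ∑_{j=1}^m n_j < N. Set B = ((N−n)/(N−m))·p(1−p)/n. Then ∑_{j=1}^m (1/m²) · (p(1−p)/n_j) · (N/m − n_j)/(N/m − 1) ≥ B, with equality if and only if n_j = n/m for every j. -/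
/-!
Writing `c = p(1-p)`, `a j = n_j` and `T = ∑ 1/a j`, the variance equals
`B + c q / (m² (q-1) n) · (n T - m²)`. The second term is nonnegative by the AM–HM inequality
`m² ≤ (∑ a j)(∑ 1/a j)`, and vanishes exactly when all `a j` are equal, which follows from the
identity `∑ᵢ ∑ⱼ (aᵢ - aⱼ)² / (aᵢ aⱼ) = 2 ((∑ a)(∑ 1/a) - m²)`.
-/

open Finset

namespace Finset

variable {ι : Type*} (s : Finset ι) (a : ι → ℝ)

theorem sum_sum_sq_sub_div_mul_eq (ha : ∀ i ∈ s, a i ≠ 0) :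
    ∑ i ∈ s, ∑ j ∈ s, (a i - a j) ^ 2 / (a i * a j)
      = 2 * ((∑ i ∈ s, a i) * (∑ i ∈ s, (a i)⁻¹) - (#s : ℝ) ^ 2) := by
  have hterm : ∀ i ∈ s, ∀ j ∈ s,
      (a i - a j) ^ 2 / (a i * a j) = a i * (a j)⁻¹ + a j * (a i)⁻¹ - 2 := by
    intro i hi j hj
    field_simp [ha i hi, ha j hj]
    ring
  rw [sum_congr rfl fun i hi => sum_congr rfl fun j hj => hterm i hi j hj]
  simp only [sum_sub_distrib, sum_add_distrib, ← mul_sum, ← sum_mul, sum_const, nsmul_eq_mul]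
  ring

variable {s a}

theorem card_sq_le_sum_mul_sum_inv (ha : ∀ i ∈ s, 0 < a i) :
    (#s : ℝ) ^ 2 ≤ (∑ i ∈ s, a i) * ∑ i ∈ s, (a i)⁻¹ := by
  have hsq := sum_sum_sq_sub_div_mul_eq s a fun i hi => (ha i hi).ne'
  have hnonneg : 0 ≤ ∑ i ∈ s, ∑ j ∈ s, (a i - a j) ^ 2 / (a i * a j) :=
    sum_nonneg fun i hi => sum_nonneg fun j hj => by have := ha i hi; have := ha j hj; positivity
  linarith

theorem sum_mul_sum_inv_eq_card_sq_iff (ha : ∀ i ∈ s, 0 < a i) :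
    (∑ i ∈ s, a i) * ∑ i ∈ s, (a i)⁻¹ = (#s : ℝ) ^ 2 ↔ ∀ i ∈ s, ∀ j ∈ s, a i = a j := by
  have hterm : ∀ i ∈ s, ∀ j ∈ s, 0 ≤ (a i - a j) ^ 2 / (a i * a j) :=
    fun i hi j hj => by have := ha i hi; have := ha j hj; positivity
  have hterm_eq_zero : ∀ i ∈ s, ∀ j ∈ s, (a i - a j) ^ 2 / (a i * a j) = 0 ↔ a i = a j :=
    fun i hi j hj => by
      have := ha i hi; have := ha j hj
      rw [div_eq_zero_iff, or_iff_left (by positivity), sq_eq_zero_iff, sub_eq_zero]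
  rw [← sub_eq_zero, ← mul_eq_zero_iff_left two_ne_zero,
    ← sum_sum_sq_sub_div_mul_eq s a fun i hi => (ha i hi).ne',
    sum_eq_zero_iff_of_nonneg fun i hi => sum_nonneg (hterm i hi)]
  refine forall₂_congr fun i hi => ?_
  rw [sum_eq_zero_iff_of_nonneg (hterm i hi)]
  exact forall₂_congr (hterm_eq_zero i hi)

end Finset

theorem Fintype.forall_eq_iff_card_mul_eq_sum {ι : Type*} [Fintype ι] (f : ι → ℕ) :
    (∀ i j, f i = f j) ↔ ∀ j, Fintype.card ι * f j = ∑ i, f i := by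
  constructor
  · intro h j
    rw [Fintype.sum_congr f (fun _ => f j) fun i => h i j, sum_const, card_univ, smul_eq_mul]
  · intro h i j
    have : Nonempty ι := ⟨i⟩
    exact Nat.eq_of_mul_eq_mul_left Fintype.card_pos ((h i).trans (h j).symm)

/-- Holds for every `n ≠ 0`; for `n = ∑ j, a j` the last factor is the AM–HM defect. -/
theorem stratified_variance_eq {ι : Type*} [Fintype ι] (a : ι → ℝ) (ha : ∀ j, a j ≠ 0)
    {m n : ℝ} (hm_card : (Fintype.card ι : ℝ) = m) (hm : m ≠ 0)
    (hn : n ≠ 0) (c q : ℝ) (hq : q - 1 ≠ 0) :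
    ∑ j, 1 / m ^ 2 * (c / a j) * ((q - a j) / (q - 1))
      = (m * q - n) / (m * q - m) * (c / n)
        + c * q / (m ^ 2 * (q - 1) * n) * (n * ∑ j, (a j)⁻¹ - m ^ 2) := by
  have hterm : ∀ j, 1 / m ^ 2 * (c / a j) * ((q - a j) / (q - 1))
      = c / (m ^ 2 * (q - 1)) * (q * (a j)⁻¹ - 1) := fun j => by
    field_simp [ha j]
  rw [sum_congr rfl fun j _ => hterm j, ← mul_sum, sum_sub_distrib, ← mul_sum, sum_const,
    card_univ, nsmul_one, hm_card]
  have hmq : m * q - m ≠ 0 := by rw [← mul_sub_one]; exact mul_ne_zero hm hq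
  field_simp
  ring

theorem stratified_lower_bound_c3_general (m : ℕ) (hm : 2 ≤ m)
    (q : ℕ) (hq : 2 ≤ q) (N : ℕ) (hNq : N = m * q)
    (nj : Fin m → ℕ) (n : ℕ) (hn : n = ∑ j, nj j)
    (halloc : ∀ j, 1 ≤ nj j ∧ nj j ≤ q)
    (p : ℝ) (hp : p ∈ Set.Ioo (0 : ℝ) 1)
    (B : ℝ) (hB : B = (((N : ℝ) - n) / ((N : ℝ) - m)) * (p * (1 - p) / n)) :
    (∑ j, (1 / (m : ℝ) ^ 2) * (p * (1 - p) / nj j) *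
        (((q : ℝ) - nj j) / ((q : ℝ) - 1)) ≥ B)
    ∧ (∑ j, (1 / (m : ℝ) ^ 2) * (p * (1 - p) / nj j) *
          (((q : ℝ) - nj j) / ((q : ℝ) - 1)) = B
        ↔ ∀ j, m * nj j = n) := by
  set a : Fin m → ℝ := fun j => nj j
  have ha : ∀ j ∈ univ, 0 < a j := fun j _ => Nat.cast_pos.mpr (halloc j).1
  have hsum : ∑ j, a j = n := by simp [a, hn]
  have hn_pos : (0 : ℝ) < n := hsum ▸ sum_pos ha ⟨⟨0, by omega⟩, mem_univ _⟩
  have hc : 0 < p * (1 - p) := mul_pos hp.1 (sub_pos.mpr hp.2)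
  have hq1 : (0 : ℝ) < q - 1 := sub_pos.mpr (by exact_mod_cast hq)
  have hK : 0 < p * (1 - p) * q / (m ^ 2 * (q - 1) * n) :=
    div_pos (mul_pos hc (by positivity)) (mul_pos (mul_pos (by positivity) hq1) hn_pos)
  have hvar := stratified_variance_eq a (fun j => (ha j (mem_univ j)).ne') (m := (m : ℝ))
    (by simp) (by positivity) hn_pos.ne' (p * (1 - p)) q hq1.ne'
  have hamhm := card_sq_le_sum_mul_sum_inv ha
  rw [card_univ, Fintype.card_fin, hsum] at hamhm
  rw [hvar, hB, hNq, Nat.cast_mul, ge_iff_le, le_add_iff_nonneg_right, add_eq_left,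
    mul_eq_zero, or_iff_right hK.ne', sub_eq_zero]
  refine ⟨mul_nonneg hK.le (sub_nonneg.mpr hamhm), ?_⟩
  have hequal := sum_mul_sum_inv_eq_card_sq_iff ha
  rw [card_univ, Fintype.card_fin, hsum] at hequal
  have hbalanced := Fintype.forall_eq_iff_card_mul_eq_sum nj
  rw [Fintype.card_fin, ← hn] at hbalanced
  simp only [hequal, ← hbalanced, mem_univ, forall_const, a, Nat.cast_inj]

/-- **Theorem 3, case (c3).** If all strata have equal size
`N/m = q ≥ 2`, all with the same red-ball fraction `p`, and `n < N`, then the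
variance of the stratification estimator without replacement is at least
`B = ((N-n)/(N-m))·p(1-p)/n`, with equality iff `nⱼ = n/m` for all `j`. -/
theorem stratified_lower_bound_c3 (m : ℕ) (hm : 2 ≤ m)
    (q : ℕ) (hq : 2 ≤ q) (N : ℕ) (hNq : N = m * q)
    (nj : Fin m → ℕ) (n : ℕ) (hn : n = ∑ j, nj j) (hnN : n < N)
    (halloc : ∀ j, 1 ≤ nj j ∧ nj j ≤ q)
    (p : ℝ) (hp : p ∈ Set.Ioo (0 : ℝ) 1)
    (B : ℝ) (hB : B = (((N : ℝ) - n) / ((N : ℝ) - m)) * (p * (1 - p) / n)) :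
    (∑ j, (1 / (m : ℝ) ^ 2) * (p * (1 - p) / nj j) *
        (((q : ℝ) - nj j) / ((q : ℝ) - 1)) ≥ B)
    ∧ (∑ j, (1 / (m : ℝ) ^ 2) * (p * (1 - p) / nj j) *
          (((q : ℝ) - nj j) / ((q : ℝ) - 1)) = B
        ↔ ∀ j, m * nj j = n) :=
  stratified_lower_bound_c3_general m hm q hq N hNq nj n hn halloc p hp B hB
end

section
/- Theorem 4: Let m ≥ 2, suppose N_j = N/m ≥ 2 and n_j = n/m ≥ 1 are integers for all j, with n < N. Let p_1,…,p_m ∈ [0,1] satisfy (1/m)·∑_{j=1}^m p_j = p. Set B = ((N−n)/(N−m))·p(1−p)/n. Then ∑_{j=1}^m (1/m²) · (p_j(1−p_j)/(n/m)) · (N/m − n/m)/(N/m − 1) ≤ B, with equality if and only if p_1 = p_2 = … = p_m (= p). -/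
open Finset

/-! The variance bound is the Bernoulli variance decomposition: for fractions `pⱼ` with mean `p`,
`∑ pⱼ(1 - pⱼ) + ∑ (pⱼ - p)² = m·p(1 - p)`. After factoring out the common positive constant
`(q - s)/((q - 1)·s·m²)`, the stratified variance is `∑ pⱼ(1 - pⱼ)` and `B` is `m·p(1 - p)`, so the
gap between them is the (scaled) spread `∑ (pⱼ - p)²`, which vanishes only when every `pⱼ = p`. -/

section BernoulliVariance

variable {ι : Type*} (s : Finset ι) (f : ι → ℝ) {p : ℝ}

theorem sum_mul_one_sub_add_sum_sq_sub_eq (hp : ∑ i ∈ s, f i = #s * p) :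
    ∑ i ∈ s, f i * (1 - f i) + ∑ i ∈ s, (f i - p) ^ 2 = #s * (p * (1 - p)) := by
  have hpoint : ∀ i ∈ s, f i * (1 - f i) + (f i - p) ^ 2 = (1 - 2 * p) * f i + p ^ 2 :=
    fun i _ => by ring
  rw [← sum_add_distrib, sum_congr rfl hpoint, sum_add_distrib, ← mul_sum, hp, sum_const,
    nsmul_eq_mul]
  ring

theorem sum_mul_one_sub_le (hp : ∑ i ∈ s, f i = #s * p) :
    ∑ i ∈ s, f i * (1 - f i) ≤ #s * (p * (1 - p)) := by
  have hspread : 0 ≤ ∑ i ∈ s, (f i - p) ^ 2 := sum_nonneg fun i _ => sq_nonneg _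
  linarith [sum_mul_one_sub_add_sum_sq_sub_eq s f hp]

theorem sum_mul_one_sub_eq_iff (hp : ∑ i ∈ s, f i = #s * p) :
    ∑ i ∈ s, f i * (1 - f i) = #s * (p * (1 - p)) ↔ ∀ i ∈ s, f i = p := by
  have hdecomp := sum_mul_one_sub_add_sum_sq_sub_eq s f hp
  have hspread : ∑ i ∈ s, (f i - p) ^ 2 = 0 ↔ ∀ i ∈ s, f i = p := by
    simp only [sum_eq_zero_iff_of_nonneg fun i _ => sq_nonneg (f i - p), sq_eq_zero_iff,
      sub_eq_zero]
  rw [← hspread]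
  constructor <;> intro h <;> linarith

end BernoulliVariance

theorem Fintype.forall_eq_mean_iff {ι : Type*} [Fintype ι] [Nonempty ι] {f : ι → ℝ} {p : ℝ}
    (hp : ∑ i, f i = Fintype.card ι * p) : (∀ i, f i = p) ↔ ∀ i j, f i = f j := by
  refine ⟨fun h i j => by rw [h i, h j], fun h i => ?_⟩
  have hconst : ∑ j, f j = Fintype.card ι * f i := by
    rw [Fintype.sum_congr _ _ fun j => h j i, Finset.sum_const, Finset.card_univ, nsmul_eq_mul]
  exact mul_left_cancel₀ (Nat.cast_ne_zero.mpr Fintype.card_ne_zero) (hconst.symm.trans hp)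

theorem stratified_upper_bound_equal_strata_general (m : ℕ)
    (q : ℕ) (N : ℕ) (hNq : N = m * q)
    (s : ℕ) (hs : 1 ≤ s) (n : ℕ) (hns : n = m * s) (hnN : n < N)
    (pj : Fin m → ℝ)
    (p : ℝ) (hp : (1 / (m : ℝ)) * ∑ j, pj j = p)
    (B : ℝ) (hB : B = (((N : ℝ) - n) / ((N : ℝ) - m)) * (p * (1 - p) / n)) :
    (∑ j, (1 / (m : ℝ) ^ 2) * (pj j * (1 - pj j) / s) *
        (((q : ℝ) - s) / ((q : ℝ) - 1)) ≤ B)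
    ∧ (∑ j, (1 / (m : ℝ) ^ 2) * (pj j * (1 - pj j) / s) *
          (((q : ℝ) - s) / ((q : ℝ) - 1)) = B
        ↔ ∀ i j, pj i = pj j) := by
  subst hNq hns
  have hm : 0 < m := Nat.pos_of_ne_zero fun h => by simp [h] at hnN
  have hsq : s < q := Nat.lt_of_mul_lt_mul_left hnN
  have : NeZero m := ⟨hm.ne'⟩
  have hmr : (m : ℝ) ≠ 0 := by positivity
  have hsqr : (s : ℝ) + 1 ≤ q := by exact_mod_cast hsq
  have hsr : (1 : ℝ) ≤ s := by exact_mod_cast hs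
  set c : ℝ := (1 / (m : ℝ) ^ 2) * (1 / s) * (((q : ℝ) - s) / ((q : ℝ) - 1)) with hc_def
  have hc : 0 < c := by
    have : (0 : ℝ) < ((q : ℝ) - s) / ((q : ℝ) - 1) := div_pos (by linarith) (by linarith)
    positivity
  have hmean : ∑ j, pj j = #(univ : Finset (Fin m)) * p := by
    rw [← hp, card_univ, Fintype.card_fin]
    field_simp
  have hvar : ∑ j, (1 / (m : ℝ) ^ 2) * (pj j * (1 - pj j) / s) * (((q : ℝ) - s) / ((q : ℝ) - 1))
      = c * ∑ j, pj j * (1 - pj j) := by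
    rw [mul_sum]
    exact sum_congr rfl fun j _ => by rw [hc_def]; ring
  have hBc : B = c * (#(univ : Finset (Fin m)) * (p * (1 - p))) := by
    rw [hB, card_univ, Fintype.card_fin]
    push_cast
    have hcorrection : ((m : ℝ) * q - m * s) / (m * q - m) = (q - s) / (q - 1) := by
      rw [← mul_sub, ← mul_sub_one, mul_div_mul_left _ _ hmr]
    rw [hcorrection, hc_def]
    field_simp
  rw [hvar, hBc, mul_right_inj' hc.ne', sum_mul_one_sub_eq_iff _ _ hmean,
    ← Fintype.forall_eq_mean_iff (by simpa using hmean)]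
  exact ⟨mul_le_mul_of_nonneg_left (sum_mul_one_sub_le _ _ hmean) hc.le, by simp⟩

/-- **Theorem 4.** With `m` strata of equal size `N/m = q ≥ 2`, equal
sample sizes `n/m = s ≥ 1`, `n < N`, and red-ball fractions `pⱼ ∈ [0,1]` averaging
to `p`, the variance of the stratification estimator without replacement is at most
`B = ((N-n)/(N-m))·p(1-p)/n`, with equality iff all the `pⱼ` are equal. -/
theorem stratified_upper_bound_equal_strata (m : ℕ) (hm : 2 ≤ m)
    (q : ℕ) (hq : 2 ≤ q) (N : ℕ) (hNq : N = m * q)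
    (s : ℕ) (hs : 1 ≤ s) (n : ℕ) (hns : n = m * s) (hsq : s ≤ q) (hnN : n < N)
    (pj : Fin m → ℝ) (hpj : ∀ j, pj j ∈ Set.Icc (0 : ℝ) 1)
    (p : ℝ) (hp : (1 / (m : ℝ)) * ∑ j, pj j = p)
    (B : ℝ) (hB : B = (((N : ℝ) - n) / ((N : ℝ) - m)) * (p * (1 - p) / n)) :
    (∑ j, (1 / (m : ℝ) ^ 2) * (pj j * (1 - pj j) / s) *
        (((q : ℝ) - s) / ((q : ℝ) - 1)) ≤ B)
    ∧ (∑ j, (1 / (m : ℝ) ^ 2) * (pj j * (1 - pj j) / s) *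
          (((q : ℝ) - s) / ((q : ℝ) - 1)) = B
        ↔ ∀ i j, pj i = pj j) :=
  stratified_upper_bound_equal_strata_general m q N hNq s hs n hns hnN pj p hp B hB
end

section
/- Let m ≥ 2 and n, N be positive integers with n + m ≤ N, and let p ∈ (0,1). Then ((N−m−n)/(N−m))·p(1−p)/(n+m) ≤ ((N−n)/(N−1))·p(1−p)/n. That is, in the situation of Theorem 4, if for every stratum the sample size is increased by 1, the new bound B_new = ((N−(n+m))/(N−m))·p(1−p)/(n+m) on the variance of the stratification estimator without replacement does not exceed the simple-random-sample (without replacement) variance ((N−n)/(N−1))·p(1−p)/n corresponding to the old sample size n. -/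
/-! Both factors decrease: the finite-population correction because
`(N - n)(N - m) - (N - m - n)(N - 1) = (N - m) + n(m - 1) ≥ 0`, and the variance term because
`p(1 - p)/(n + m) ≤ p(1 - p)/n`. -/

theorem sub_sub_div_sub_le_sub_div_sub_one {K : Type*} [Field K] [LinearOrder K]
    [IsStrictOrderedRing K] {N m n : K} (hm : 1 ≤ m) (hmN : m < N) (hn : 0 ≤ n) :
    (N - m - n) / (N - m) ≤ (N - n) / (N - 1) := by
  rw [div_le_div_iff₀ (by linarith) (by linarith)]
  nlinarith [mul_nonneg hn (sub_nonneg.2 hm)]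

theorem increased_sample_bound_general (m n N : ℕ) (hm : 2 ≤ m) (hn : 1 ≤ n)
    (hnmN : n + m ≤ N) (p : ℝ) (hp : p ∈ Set.Ioo (0 : ℝ) 1) :
    (((N : ℝ) - m - n) / ((N : ℝ) - m)) * (p * (1 - p) / ((n : ℝ) + m))
      ≤ (((N : ℝ) - n) / ((N : ℝ) - 1)) * (p * (1 - p) / n) := by
  have hm' : (1 : ℝ) ≤ m := by exact_mod_cast (by omega : 1 ≤ m)
  have hn' : (1 : ℝ) ≤ n := by exact_mod_cast hn
  have hnmN' : (n : ℝ) + m ≤ N := by exact_mod_cast hnmN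
  have hvar : 0 ≤ p * (1 - p) := mul_nonneg hp.1.le (sub_nonneg.2 hp.2.le)
  exact mul_le_mul (sub_sub_div_sub_le_sub_div_sub_one hm' (by linarith) (by linarith))
    (div_le_div_of_nonneg_left hvar (by linarith) (by linarith)) (by positivity)
    (div_nonneg (by linarith) (by linarith))

/-- Increasing every stratum's sample size by one: the new bound
`B_new = ((N-m-n)/(N-m))·p(1-p)/(n+m)` does not exceed the without-replacement
simple-random-sample variance `((N-n)/(N-1))·p(1-p)/n` at the old sample size. -/
theorem increased_sample_bound (m n N : ℕ) (hm : 2 ≤ m) (hn : 1 ≤ n) (hN : 1 ≤ N)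
    (hnmN : n + m ≤ N) (p : ℝ) (hp : p ∈ Set.Ioo (0 : ℝ) 1) :
    (((N : ℝ) - m - n) / ((N : ℝ) - m)) * (p * (1 - p) / ((n : ℝ) + m))
      ≤ (((N : ℝ) - n) / ((N : ℝ) - 1)) * (p * (1 - p) / n) :=
  increased_sample_bound_general m n N hm hn hnmN p hp
end

section
/- Part of Theorem 5 (upper bound under proportional allocation): Let m ≥ 2, let N_1,…,N_m ≥ 2 be integers with N = ∑_{j=1}^m N_j and n < N, suppose n_j = (N_j/N)·n is a positive integer for every j, and let p ∈ (0,1). Then for all p_1,…,p_m ∈ [0,1] with ∑_{j=1}^m p_j N_j = pN, ∑_{j=1}^m (N_j/N)² · (p_j(1−p_j)/n_j) · (N_j−n_j)/(N_j−1) ≤ ((N−n)/(4(N−m)n)) · ( ((N−m)/N²)·∑_{j=1}^m N_j²/(N_j−1) − (2p−1)² ) = B + ((N−n)/(4(N−m)nN²))·∑_{j=1}^m (N−mN_j)/(N_j−1), where B = ((N−n)/(N−m))·p(1−p)/n. -/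
/-!
Under proportional allocation `n_j = N_j n / N` the `j`-th term of the variance is
`(N - n)/(N² n) · N_j²/(N_j - 1) · p_j(1 - p_j)`. Writing `p_j(1 - p_j) = (1 - (2p_j - 1)²)/4`,
the bound amounts to a lower bound on `∑ N_j² (2p_j - 1)²/(N_j - 1)`, which Cauchy–Schwarz
(Sedrakyan's form, with weights `N_j - 1` summing to `N - m`) gives as `N²(2p - 1)²/(N - m)`,
since `∑ N_j (2p_j - 1) = N(2p - 1)`. The second expression for the bound follows from the
identity `(N - m) ∑ N_j²/(N_j - 1) - ∑ (N - m N_j)/(N_j - 1) = N²`.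
-/

open Finset

lemma proportional_allocation_term_eq {Nj N n : ℝ} (q : ℝ) (hN : N ≠ 0) (hNj : Nj ≠ 0)
    (hNj1 : Nj - 1 ≠ 0) (hn : n ≠ 0) :
    (Nj / N) ^ 2 * (q / (Nj / N * n)) * ((Nj - Nj / N * n) / (Nj - 1))
      = (N - n) / (N ^ 2 * n) * (Nj ^ 2 / (Nj - 1) * q) := by
  field_simp

section

variable {ι : Type*} [Fintype ι] {w : ι → ℝ} {N : ℝ}

lemma card_lt_sum_of_one_lt [Nonempty ι] (hw : ∀ i, 1 < w i) :
    (Fintype.card ι : ℝ) < ∑ i, w i := by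
  have h := sum_pos (fun i _ => sub_pos.mpr (hw i)) (univ_nonempty (α := ι))
  rw [sum_sub_distrib] at h
  simpa using h

lemma sum_sq_div_sub_one_mul_one_sub_le (hw : ∀ i, 1 < w i) (q : ι → ℝ) :
    ∑ i, w i ^ 2 / (w i - 1) * (q i * (1 - q i))
      ≤ (∑ i, w i ^ 2 / (w i - 1) - (∑ i, w i * (2 * q i - 1)) ^ 2 / ∑ i, (w i - 1)) / 4 := by
  have hw1 : ∀ i, 0 < w i - 1 := fun i => sub_pos.mpr (hw i)
  have cauchy_schwarz := sq_sum_div_le_sum_sq_div univ (fun i => w i * (2 * q i - 1))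
    (fun i _ => hw1 i)
  have split : ∑ i, w i ^ 2 / (w i - 1) * (q i * (1 - q i))
      = (∑ i, w i ^ 2 / (w i - 1) - ∑ i, (w i * (2 * q i - 1)) ^ 2 / (w i - 1)) / 4 := by
    rw [← sum_sub_distrib, sum_div]
    refine sum_congr rfl fun i _ => ?_
    field_simp [(hw1 i).ne']
    ring
  rw [split]
  linarith

lemma sub_card_mul_sum_sq_div_sub_one_sub_sum (hw : ∀ i, w i ≠ 1) (hN : ∑ i, w i = N) :
    (N - Fintype.card ι) * ∑ i, w i ^ 2 / (w i - 1)
      - ∑ i, (N - Fintype.card ι * w i) / (w i - 1) = N ^ 2 := by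
  have term_eq : ∀ i ∈ univ, (N - Fintype.card ι) * (w i ^ 2 / (w i - 1))
      - (N - Fintype.card ι * w i) / (w i - 1) = N * (w i + 1) - Fintype.card ι * w i := by
    intro i _
    field_simp [sub_ne_zero.mpr (hw i)]
    ring
  rw [mul_sum, ← sum_sub_distrib, sum_congr rfl term_eq, sum_sub_distrib, ← mul_sum, ← mul_sum,
    sum_add_distrib, hN, sum_const, card_univ, nsmul_eq_mul, mul_one]
  ring

variable [Nonempty ι] {n p : ℝ}

theorem proportional_variance_le (hw : ∀ i, 1 < w i) (hN : ∑ i, w i = N) (hn : 0 < n)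
    (hnN : n ≤ N) (q : ι → ℝ) (hq : ∑ i, q i * w i = p * N) :
    ∑ i, (w i / N) ^ 2 * (q i * (1 - q i) / (w i / N * n)) * ((w i - w i / N * n) / (w i - 1))
      ≤ (N - n) / (4 * (N - Fintype.card ι) * n)
          * ((N - Fintype.card ι) / N ^ 2 * ∑ i, w i ^ 2 / (w i - 1) - (2 * p - 1) ^ 2) := by
  have hcard : (Fintype.card ι : ℝ) < N := hN ▸ card_lt_sum_of_one_lt hw
  have hN0 : N ≠ 0 := ((Nat.cast_nonneg _).trans_lt hcard).ne'
  have hNc : N - Fintype.card ι ≠ 0 := sub_ne_zero.mpr hcard.ne'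
  have hsign : ∑ i, w i * (2 * q i - 1) = N * (2 * p - 1) := by
    calc ∑ i, w i * (2 * q i - 1) = 2 * ∑ i, q i * w i - ∑ i, w i := by
          rw [mul_sum, ← sum_sub_distrib]
          exact sum_congr rfl fun i _ => by ring
      _ = N * (2 * p - 1) := by rw [hq, hN]; ring
  have hsum1 : ∑ i, (w i - 1) = N - Fintype.card ι := by simp [sum_sub_distrib, hN]
  calc _ = (N - n) / (N ^ 2 * n) * ∑ i, w i ^ 2 / (w i - 1) * (q i * (1 - q i)) := by
        rw [mul_sum]
        exact sum_congr rfl fun i _ => proportional_allocation_term_eq _ hN0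
          (by linarith [hw i]) (by linarith [hw i]) hn.ne'
    _ ≤ (N - n) / (N ^ 2 * n) * ((∑ i, w i ^ 2 / (w i - 1)
          - (∑ i, w i * (2 * q i - 1)) ^ 2 / ∑ i, (w i - 1)) / 4) := by
        have := sub_nonneg.mpr hnN
        exact mul_le_mul_of_nonneg_left (sum_sq_div_sub_one_mul_one_sub_le hw q) (by positivity)
    _ = _ := by
        rw [hsign, hsum1]
        field_simp

theorem proportional_variance_bound_eq (hw : ∀ i, 1 < w i) (hN : ∑ i, w i = N) (hn : n ≠ 0) :
    (N - n) / (4 * (N - Fintype.card ι) * n)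
        * ((N - Fintype.card ι) / N ^ 2 * ∑ i, w i ^ 2 / (w i - 1) - (2 * p - 1) ^ 2)
      = (N - n) / (N - Fintype.card ι) * (p * (1 - p) / n)
        + (N - n) / (4 * (N - Fintype.card ι) * n * N ^ 2)
          * ∑ i, (N - Fintype.card ι * w i) / (w i - 1) := by
  have hcard : (Fintype.card ι : ℝ) < N := hN ▸ card_lt_sum_of_one_lt hw
  have hN0 : N ≠ 0 := ((Nat.cast_nonneg _).trans_lt hcard).ne'
  have hNc : N - Fintype.card ι ≠ 0 := sub_ne_zero.mpr hcard.ne'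
  have key := sub_card_mul_sum_sq_div_sub_one_sub_sum (fun i => (hw i).ne') hN
  rw [show ∑ i, (N - Fintype.card ι * w i) / (w i - 1)
    = (N - Fintype.card ι) * ∑ i, w i ^ 2 / (w i - 1) - N ^ 2 by linarith]
  field_simp
  ring

end

theorem stratified_variance_upper_bound_proportional_general (m : ℕ)
    (Nj : Fin m → ℕ) (hNj : ∀ j, 2 ≤ Nj j) (N : ℕ) (hN : N = ∑ j, Nj j)
    (nj : Fin m → ℕ) (n : ℕ) (hnN : n < N)
    (hpos : ∀ j, 1 ≤ nj j) (hprop : ∀ j, (nj j : ℝ) = ((Nj j : ℝ) / N) * n)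
    (p : ℝ)
    (B : ℝ) (hB : B = (((N : ℝ) - n) / ((N : ℝ) - m)) * (p * (1 - p) / n)) :
    (∀ pj : Fin m → ℝ, (∀ j, pj j ∈ Set.Icc (0 : ℝ) 1) →
        (∑ j, pj j * Nj j = p * N) →
        ∑ j, ((Nj j : ℝ) / N) ^ 2 * (pj j * (1 - pj j) / nj j) *
            (((Nj j : ℝ) - nj j) / ((Nj j : ℝ) - 1))
          ≤ (((N : ℝ) - n) / (4 * ((N : ℝ) - m) * n)) *
              ((((N : ℝ) - m) / (N : ℝ) ^ 2) * (∑ j, (Nj j : ℝ) ^ 2 / ((Nj j : ℝ) - 1))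
                - (2 * p - 1) ^ 2))
    ∧ (((N : ℝ) - n) / (4 * ((N : ℝ) - m) * n)) *
          ((((N : ℝ) - m) / (N : ℝ) ^ 2) * (∑ j, (Nj j : ℝ) ^ 2 / ((Nj j : ℝ) - 1))
            - (2 * p - 1) ^ 2)
        = B + (((N : ℝ) - n) / (4 * ((N : ℝ) - m) * n * (N : ℝ) ^ 2)) *
            ∑ j, (((N : ℝ) - m * Nj j) / ((Nj j : ℝ) - 1)) := by
  have hm : 0 < m := Nat.pos_of_ne_zero <| by rintro rfl; simp [hN] at hnN
  have : Nonempty (Fin m) := ⟨⟨0, hm⟩⟩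
  have hw : ∀ j, 1 < (Nj j : ℝ) := fun j => by exact_mod_cast hNj j
  have hsum : ∑ j, (Nj j : ℝ) = N := by rw [hN]; push_cast; rfl
  have hn : (0 : ℝ) < n := by
    have h : (0 : ℝ) < Nj ⟨0, hm⟩ / N * n := hprop _ ▸ (by exact_mod_cast hpos ⟨0, hm⟩)
    exact pos_of_mul_pos_right h (by positivity)
  simp only [hprop]
  refine ⟨fun pj _ hpj => ?_, ?_⟩
  · simpa only [Fintype.card_fin] using
      proportional_variance_le hw hsum hn (by exact_mod_cast hnN.le) pj hpj
  · simpa only [Fintype.card_fin, hB] using proportional_variance_bound_eq (p := p) hw hsum hn.ne'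

/-- **part of Theorem 5.** Under proportional allocation, for every
distribution `(p₁,…,pₘ)` of the red balls over the strata, the variance of the
stratification estimator without replacement is at most
`((N-n)/(4(N-m)n))·(((N-m)/N²)·∑ⱼ Nⱼ²/(Nⱼ-1) - (2p-1)²)`, which equals
`B + ((N-n)/(4(N-m)nN²))·∑ⱼ (N-mNⱼ)/(Nⱼ-1)` with `B = ((N-n)/(N-m))·p(1-p)/n`. -/
theorem stratified_variance_upper_bound_proportional (m : ℕ) (hm : 2 ≤ m)
    (Nj : Fin m → ℕ) (hNj : ∀ j, 2 ≤ Nj j) (N : ℕ) (hN : N = ∑ j, Nj j)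
    (nj : Fin m → ℕ) (n : ℕ) (hn : n = ∑ j, nj j) (hnN : n < N)
    (hpos : ∀ j, 1 ≤ nj j) (hprop : ∀ j, (nj j : ℝ) = ((Nj j : ℝ) / N) * n)
    (p : ℝ) (hp : p ∈ Set.Ioo (0 : ℝ) 1)
    (B : ℝ) (hB : B = (((N : ℝ) - n) / ((N : ℝ) - m)) * (p * (1 - p) / n)) :
    (∀ pj : Fin m → ℝ, (∀ j, pj j ∈ Set.Icc (0 : ℝ) 1) →
        (∑ j, pj j * Nj j = p * N) →
        ∑ j, ((Nj j : ℝ) / N) ^ 2 * (pj j * (1 - pj j) / nj j) *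
            (((Nj j : ℝ) - nj j) / ((Nj j : ℝ) - 1))
          ≤ (((N : ℝ) - n) / (4 * ((N : ℝ) - m) * n)) *
              ((((N : ℝ) - m) / (N : ℝ) ^ 2) * (∑ j, (Nj j : ℝ) ^ 2 / ((Nj j : ℝ) - 1))
                - (2 * p - 1) ^ 2))
    ∧ (((N : ℝ) - n) / (4 * ((N : ℝ) - m) * n)) *
          ((((N : ℝ) - m) / (N : ℝ) ^ 2) * (∑ j, (Nj j : ℝ) ^ 2 / ((Nj j : ℝ) - 1))
            - (2 * p - 1) ^ 2)
        = B + (((N : ℝ) - n) / (4 * ((N : ℝ) - m) * n * (N : ℝ) ^ 2)) *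
            ∑ j, (((N : ℝ) - m * Nj j) / ((Nj j : ℝ) - 1)) :=
  stratified_variance_upper_bound_proportional_general m Nj hNj N hN nj n hnN hpos hprop p B hB
end

section
/- Let m ≥ 1, let α_1,…,α_m and β_1,…,β_m be positive reals with ∑_{j=1}^m β_j = 1, and let p ∈ ℝ. Then for all reals p_1,…,p_m with ∑_{j=1}^m β_j (p_j − p) = 0, ∑_{j=1}^m α_j p_j(1−p_j) ≤ (1/4)·( ∑_{j=1}^m α_j − (2p−1)² / ∑_{k=1}^m α_k^{−1} β_k² ), and this bound is attained at p_j = 1/2 + β_j(p − 1/2)/(α_j · ∑_{k=1}^m α_k^{−1} β_k²). -/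
/-!
Writing `pⱼ = 1/2 + qⱼ` turns the objective into `(∑ αⱼ)/4 - ∑ αⱼ qⱼ²` and the constraint into
`∑ βⱼ qⱼ = p - 1/2`. Minimizing the positive definite form `∑ αⱼ qⱼ²` on the hyperplane
`∑ βⱼ qⱼ = r` is done by completing the square around the Lagrange point `q*ⱼ = βⱼ r / (αⱼ S)`,
`S = ∑ βₖ²/αₖ`: on the hyperplane, `∑ αⱼ qⱼ² = ∑ αⱼ (qⱼ - q*ⱼ)² + r²/S`.
-/

open Finset

section WeightedSquares

variable {ι : Type*} [Fintype ι] {α β : ι → ℝ} {S : ℝ}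

theorem sum_mul_sub_of_sum_eq_one (hβ : ∑ j, β j = 1) (x : ι → ℝ) (a : ℝ) :
    ∑ j, β j * (x j - a) = ∑ j, β j * x j - a := by
  simp only [mul_sub, sum_sub_distrib, ← sum_mul, hβ, one_mul]

theorem sum_mul_mul_one_sub (x : ι → ℝ) :
    ∑ j, α j * (x j * (1 - x j)) = (∑ j, α j) / 4 - ∑ j, α j * (x j - 1 / 2) ^ 2 := by
  rw [sum_div, ← sum_sub_distrib]
  exact sum_congr rfl fun j _ => by ring

theorem sum_inv_mul_sq_pos (hα : ∀ j, 0 < α j) (hβ : ∃ j, β j ≠ 0) :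
    0 < ∑ k, (α k)⁻¹ * β k ^ 2 := by
  obtain ⟨j, hj⟩ := hβ
  exact sum_pos' (fun k _ => by have := hα k; positivity)
    ⟨j, mem_univ j, by have := hα j; positivity⟩

theorem sum_mul_div_mul_eq (hα : ∀ j, α j ≠ 0) (hS : ∑ k, (α k)⁻¹ * β k ^ 2 = S)
    (hS0 : S ≠ 0) (r : ℝ) :
    ∑ j, β j * (β j * r / (α j * S)) = r := by
  have hterm : ∀ j, β j * (β j * r / (α j * S)) = r / S * ((α j)⁻¹ * β j ^ 2) := by
    intro j
    field_simp [hα j]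
  rw [sum_congr rfl fun j _ => hterm j, ← mul_sum, hS, div_mul_cancel₀ r hS0]

theorem sum_mul_sq_eq_of_sum_mul_eq (hα : ∀ j, α j ≠ 0) (hS : ∑ k, (α k)⁻¹ * β k ^ 2 = S)
    (hS0 : S ≠ 0) {q : ι → ℝ} {r : ℝ} (hq : ∑ j, β j * q j = r) :
    ∑ j, α j * q j ^ 2 = ∑ j, α j * (q j - β j * r / (α j * S)) ^ 2 + r ^ 2 / S := by
  have hterm : ∀ j, α j * (q j - β j * r / (α j * S)) ^ 2
      = α j * q j ^ 2 - 2 * (r / S) * (β j * q j) + (r / S) ^ 2 * ((α j)⁻¹ * β j ^ 2) := by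
    intro j
    field_simp [hα j]
    ring
  rw [sum_congr rfl fun j _ => hterm j, sum_add_distrib, sum_sub_distrib, ← mul_sum, ← mul_sum,
    hq, hS]
  field_simp
  ring

theorem div_le_sum_mul_sq_of_sum_mul_eq (hα : ∀ j, 0 < α j)
    (hS : ∑ k, (α k)⁻¹ * β k ^ 2 = S) (hS0 : S ≠ 0) {q : ι → ℝ} {r : ℝ}
    (hq : ∑ j, β j * q j = r) :
    r ^ 2 / S ≤ ∑ j, α j * q j ^ 2 := by
  rw [sum_mul_sq_eq_of_sum_mul_eq (fun j => (hα j).ne') hS hS0 hq, le_add_iff_nonneg_left]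
  exact sum_nonneg fun j _ => mul_nonneg (hα j).le (sq_nonneg _)

theorem sum_mul_sq_div_mul_eq (hα : ∀ j, α j ≠ 0) (hS : ∑ k, (α k)⁻¹ * β k ^ 2 = S)
    (hS0 : S ≠ 0) (r : ℝ) :
    ∑ j, α j * (β j * r / (α j * S)) ^ 2 = r ^ 2 / S := by
  simp [sum_mul_sq_eq_of_sum_mul_eq hα hS hS0 (sum_mul_div_mul_eq hα hS hS0 r)]

end WeightedSquares

theorem lagrange_constrained_max_general (m : ℕ)
    (α β : Fin m → ℝ) (hα : ∀ j, 0 < α j)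
    (hβsum : ∑ j, β j = 1) (p : ℝ) :
    (∀ pj : Fin m → ℝ, ∑ j, β j * (pj j - p) = 0 →
        ∑ j, α j * (pj j * (1 - pj j))
          ≤ (1 / 4) * ((∑ j, α j) - (2 * p - 1) ^ 2 / ∑ k, (α k)⁻¹ * (β k) ^ 2))
    ∧ (∑ j, β j * ((1 / 2 + β j * (p - 1 / 2) / (α j * ∑ k, (α k)⁻¹ * (β k) ^ 2)) - p)
        = 0)
    ∧ (∑ j, α j * ((1 / 2 + β j * (p - 1 / 2) / (α j * ∑ k, (α k)⁻¹ * (β k) ^ 2)) *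
          (1 - (1 / 2 + β j * (p - 1 / 2) / (α j * ∑ k, (α k)⁻¹ * (β k) ^ 2))))
        = (1 / 4) * ((∑ j, α j) - (2 * p - 1) ^ 2 / ∑ k, (α k)⁻¹ * (β k) ^ 2)) := by
  obtain ⟨S, hS⟩ : ∃ S, ∑ k, (α k)⁻¹ * β k ^ 2 = S := ⟨_, rfl⟩
  obtain ⟨i, -, hi⟩ := exists_ne_zero_of_sum_ne_zero (hβsum.trans_ne one_ne_zero)
  have hS0 : S ≠ 0 := hS ▸ (sum_inv_mul_sq_pos hα ⟨i, hi⟩).ne'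
  have hα0 : ∀ j, α j ≠ 0 := fun j => (hα j).ne'
  have hbound : (1 / 4) * ((∑ j, α j) - (2 * p - 1) ^ 2 / S)
      = (∑ j, α j) / 4 - (p - 1 / 2) ^ 2 / S := by ring
  rw [hS, hbound]
  refine ⟨fun pj hpj => ?_, ?_, ?_⟩
  · have hq : ∑ j, β j * (pj j - 1 / 2) = p - 1 / 2 := by
      rw [sum_mul_sub_of_sum_eq_one hβsum] at hpj ⊢
      linarith
    rw [sum_mul_mul_one_sub]
    linarith [div_le_sum_mul_sq_of_sum_mul_eq hα hS hS0 hq]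
  · have hshift : ∀ j, 1 / 2 + β j * (p - 1 / 2) / (α j * S) - p
        = β j * (p - 1 / 2) / (α j * S) - (p - 1 / 2) := fun j => by ring
    simp only [hshift, sum_mul_sub_of_sum_eq_one hβsum, sum_mul_div_mul_eq hα0 hS hS0, sub_self]
  · rw [sum_mul_mul_one_sub]
    simp only [add_sub_cancel_left, sum_mul_sq_div_mul_eq hα0 hS hS0]

/-- The constrained maximization (by Lagrange multipliers) used in
the proof of Theorem 5: over all reals `p₁,…,pₘ` with `∑ⱼ βⱼ(pⱼ - p) = 0`, the
weighted sum `∑ⱼ αⱼ pⱼ(1-pⱼ)` is at most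
`(1/4)(∑ⱼ αⱼ - (2p-1)²/∑ₖ αₖ⁻¹βₖ²)`, and this bound is attained at
`pⱼ = 1/2 + βⱼ(p - 1/2)/(αⱼ·∑ₖ αₖ⁻¹βₖ²)`. -/
theorem lagrange_constrained_max (m : ℕ) (hm : 1 ≤ m)
    (α β : Fin m → ℝ) (hα : ∀ j, 0 < α j) (hβ : ∀ j, 0 < β j)
    (hβsum : ∑ j, β j = 1) (p : ℝ) :
    (∀ pj : Fin m → ℝ, ∑ j, β j * (pj j - p) = 0 →
        ∑ j, α j * (pj j * (1 - pj j))
          ≤ (1 / 4) * ((∑ j, α j) - (2 * p - 1) ^ 2 / ∑ k, (α k)⁻¹ * (β k) ^ 2))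
    ∧ (∑ j, β j * ((1 / 2 + β j * (p - 1 / 2) / (α j * ∑ k, (α k)⁻¹ * (β k) ^ 2)) - p)
        = 0)
    ∧ (∑ j, α j * ((1 / 2 + β j * (p - 1 / 2) / (α j * ∑ k, (α k)⁻¹ * (β k) ^ 2)) *
          (1 - (1 / 2 + β j * (p - 1 / 2) / (α j * ∑ k, (α k)⁻¹ * (β k) ^ 2))))
        = (1 / 4) * ((∑ j, α j) - (2 * p - 1) ^ 2 / ∑ k, (α k)⁻¹ * (β k) ^ 2)) :=
  lagrange_constrained_max_general m α β hα hβsum p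
end

section
/- The function ψ(x,y) = (1/y − 1)/(1 − x) is strictly convex on the convex set (0,1) × (0, 3/4]; i.e., for any two distinct points (x_1,y_1), (x_2,y_2) in (0,1) × (0,3/4] and any t ∈ (0,1), ψ(t(x_1,y_1) + (1−t)(x_2,y_2)) < t·ψ(x_1,y_1) + (1−t)·ψ(x_2,y_2). -/
/-! A function lying strictly above its tangent planes is strictly convex. For ψ, with `a = 1 - x`,
the gap between ψ at `(x', y')` and the tangent plane at `(x, y)` is, up to the positive factor
`a² y² a' y'`, a quadratic form in `(a, a')` with positive diagonal coefficients and discriminant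
`-y' (y' - y)² (4y - 4y² - y')`. For `y = y'` it is `(1 - y) y² (a - a')²`. Otherwise, if the
discriminant is not negative, `y' ≤ 3/4` forces `y ≤ 1/4`, so the cross coefficient is nonnegative
and the form is still positive on the positive quadrant. -/

theorem strictConvexOn_of_lt_add_linear {𝕜 E β : Type*} [Field 𝕜] [LinearOrder 𝕜]
    [IsStrictOrderedRing 𝕜] [AddCommGroup E] [Module 𝕜 E] [AddCommGroup β] [PartialOrder β]
    [IsOrderedAddMonoid β] [Module 𝕜 β] [PosSMulStrictMono 𝕜 β] {s : Set E} {f : E → β}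
    (hs : Convex 𝕜 s) (L : E → E →ₗ[𝕜] β)
    (hf : ∀ z ∈ s, ∀ x ∈ s, x ≠ z → f z + L z (x - z) < f x) : StrictConvexOn 𝕜 s f := by
  refine ⟨hs, fun x hx y hy hxy a b ha hb hab => ?_⟩
  set z := a • x + b • y
  have hxz : x - z = b • (x - y) := by
    simp only [z, eq_sub_of_add_eq hab]; module
  have hyz : y - z = a • (y - x) := by
    simp only [z, eq_sub_of_add_eq' hab]; module
  have hzx : x ≠ z := by
    rw [ne_eq, ← sub_eq_zero, hxz, smul_eq_zero, sub_eq_zero]; exact not_or.2 ⟨hb.ne', hxy⟩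
  have hzy : y ≠ z := by
    rw [ne_eq, ← sub_eq_zero, hyz, smul_eq_zero, sub_eq_zero]; exact not_or.2 ⟨ha.ne', hxy.symm⟩
  have hz : z ∈ s := hs hx hy ha.le hb.le hab
  calc f z = a • (f z + L z (x - z)) + b • (f z + L z (y - z)) := by
        rw [hxz, hyz, map_smul, map_smul, map_sub, map_sub]
        linear_combination (norm := module) -(hab • f z)
    _ < a • f x + b • f y :=
        add_lt_add (smul_lt_smul_of_pos_left (hf z hz x hx hzx) ha)
          (smul_lt_smul_of_pos_left (hf z hz y hy hzy) hb)

theorem psi_gap_numerator_pos {a a' y y' : ℝ} (ha : 0 < a) (ha' : 0 < a') (hy : 0 < y)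
    (hy' : 0 < y') (hy34 : y ≤ 3 / 4) (hy'34 : y' ≤ 3 / 4) (hne : a ≠ a' ∨ y ≠ y') :
    0 < (1 - y') * y ^ 2 * a ^ 2 + y' * (y' - 3 * y + 2 * y ^ 2) * a * a'
      + (1 - y) * y * y' * a' ^ 2 := by
  have h1y : 0 < 1 - y := by linarith
  have h1y' : 0 < 1 - y' := by linarith
  rcases eq_or_ne y y' with rfl | hyy'
  · have haa' : a - a' ≠ 0 := sub_ne_zero.2 (hne.resolve_right (not_not.2 rfl))
    calc 0 < (1 - y) * y ^ 2 * (a - a') ^ 2 := by positivity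
      _ = _ := by ring
  by_cases hE : 0 < 4 * y - 4 * y ^ 2 - y'
  · have hyy'2 : y' - y ≠ 0 := sub_ne_zero.2 hyy'.symm
    have hC : 0 < 4 * ((1 - y) * y * y') := by positivity
    refine pos_of_mul_pos_right (a := 4 * ((1 - y) * y * y')) ?_ hC.le
    calc 0 < (2 * ((1 - y) * y * y') * a' + y' * (y' - 3 * y + 2 * y ^ 2) * a) ^ 2
          + y' * (y' - y) ^ 2 * (4 * y - 4 * y ^ 2 - y') * a ^ 2 := by positivity
      _ = _ := by ring
  · have hy14 : y ≤ 1 / 4 := by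
      by_contra! h
      rcases hy34.lt_or_eq with h34 | rfl
      · nlinarith
      · exact hyy' (by linarith)
    have hB : 0 ≤ y' * (y' - 3 * y + 2 * y ^ 2) := by nlinarith
    have : 0 < (1 - y') * y ^ 2 * a ^ 2 := by positivity
    have : 0 ≤ y' * (y' - 3 * y + 2 * y ^ 2) * a * a' := by positivity
    have : 0 ≤ (1 - y) * y * y' * a' ^ 2 := by positivity
    linarith

noncomputable def psi (q : ℝ × ℝ) : ℝ := (1 / q.2 - 1) / (1 - q.1)

noncomputable def psiGrad (p : ℝ × ℝ) : ℝ × ℝ →ₗ[ℝ] ℝ :=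
  ((1 - p.2) / ((1 - p.1) ^ 2 * p.2)) • LinearMap.fst ℝ ℝ ℝ
    - (1 / ((1 - p.1) * p.2 ^ 2)) • LinearMap.snd ℝ ℝ ℝ

theorem psi_add_psiGrad_lt {p q : ℝ × ℝ} (hp : p ∈ Set.Ioo (0 : ℝ) 1 ×ˢ Set.Ioc (0 : ℝ) (3 / 4))
    (hq : q ∈ Set.Ioo (0 : ℝ) 1 ×ˢ Set.Ioc (0 : ℝ) (3 / 4)) (hne : q ≠ p) :
    psi p + psiGrad p (q - p) < psi q := by
  obtain ⟨x, y⟩ := p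
  obtain ⟨x', y'⟩ := q
  obtain ⟨⟨-, hx1 : x < 1⟩, hy : 0 < y, hy34 : y ≤ 3 / 4⟩ := hp
  obtain ⟨⟨-, hx'1 : x' < 1⟩, hy' : 0 < y', hy'34 : y' ≤ 3 / 4⟩ := hq
  have ha : 0 < 1 - x := sub_pos.2 hx1
  have ha' : 0 < 1 - x' := sub_pos.2 hx'1
  have hne' : 1 - x ≠ 1 - x' ∨ y ≠ y' := by
    by_contra! h
    exact hne (Prod.ext (sub_right_inj.1 h.1).symm h.2.symm)
  have hgap : psi (x', y') - (psi (x, y) + psiGrad (x, y) ((x', y') - (x, y)))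
      = ((1 - y') * y ^ 2 * (1 - x) ^ 2 + y' * (y' - 3 * y + 2 * y ^ 2) * (1 - x) * (1 - x')
        + (1 - y) * y * y' * (1 - x') ^ 2) / ((1 - x) ^ 2 * y ^ 2 * (1 - x') * y') := by
    simp only [psi, psiGrad, LinearMap.sub_apply, LinearMap.smul_apply, LinearMap.fst_apply,
      LinearMap.snd_apply, Prod.fst_sub, Prod.snd_sub, smul_eq_mul]
    field_simp
    ring
  have hnum := psi_gap_numerator_pos ha ha' hy hy' hy34 hy'34 hne'
  exact sub_pos.1 (hgap ▸ div_pos hnum (by positivity))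

/-- The function `ψ(x,y) = (1/y - 1)/(1 - x)` is strictly convex
on `(0,1) × (0, 3/4]`. -/
theorem psi_strictConvexOn :
    StrictConvexOn ℝ ((Set.Ioo (0 : ℝ) 1) ×ˢ (Set.Ioc (0 : ℝ) (3 / 4)))
      (fun q : ℝ × ℝ => (1 / q.2 - 1) / (1 - q.1)) :=
  strictConvexOn_of_lt_add_linear ((convex_Ioo 0 1).prod (convex_Ioc 0 (3 / 4))) psiGrad
    fun _ hp _ hq => psi_add_psiGrad_lt hp hq
end
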